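/- Let μ(x) = 2 + sin(log|x|) for 0 < |x| < 1/2 and N ≥ 3. Then |x|^2 U_μ(x) = (1/4)(cos log|x| / (2 + sin log|x|))^2 - (1/2)((N-2)cos log|x| - sin log|x|)/(2 + sin log|x|), and lim sup_{x→0} |x|^2 U_μ(x) > 0; consequently c_{0,μ} := lim inf_{x→0}(c_0(N) - |x|^2 U_μ(x)) < c_0(N). -/

import Mathlib

/-!
Write a weight of the form `μ(x) = h(log |x|)` as `g(|x|²)` with `g(t) = h(log t / 2)`; since
`|x|²` is smooth, `∇μ = 2 g'(|x|²) x` and `Δμ = 2N g'(|x|²) + 4|x|² g''(|x|²)`, which gives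
`|x|² U_μ(x) = V(log |x|)` with `V = ¼ (h'/h)² - ½ (h'' + (N-2) h') / h`. For `h = 2 + sin`,
`V` is bounded and `2π`-periodic with `V(π/2) = 1/6`, and `log |x| ≡ π/2 (mod 2π)` along a
sequence tending to `0`. Hence `lim sup |x|² U_μ ≥ 1/6`, and
`lim inf (c₀ - |x|² U_μ) = c₀ - lim sup |x|² U_μ < c₀`.
-/

open MeasureTheory Metric Filter Set

noncomputable section

/-- The Laplacian of a scalar function on Euclidean space. -/
def lap {N : ℕ} (f : EuclideanSpace ℝ (Fin N) → ℝ) (x : EuclideanSpace ℝ (Fin N)) : ℝ :=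
  ∑ i, fderiv ℝ (fun y => fderiv ℝ f y (EuclideanSpace.single i 1)) x (EuclideanSpace.single i 1)

/-- The Schrödinger potential `U_μ = (1/4)|∇μ/μ|² - (1/2)Δμ/μ`. -/
def Umu {N : ℕ} (μ : EuclideanSpace ℝ (Fin N) → ℝ) (x : EuclideanSpace ℝ (Fin N)) : ℝ :=
  (1 / 4) * ‖gradient μ x‖ ^ 2 / μ x ^ 2 - (1 / 2) * lap μ x / μ x

open Real Topology

section RadialCalculus

variable {F : Type*} [NormedAddCommGroup F] [InnerProductSpace ℝ F] {g : ℝ → ℝ} {d : ℝ}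
  {x : F}

theorem hasFDerivAt_comp_norm_sq (hg : HasDerivAt g d (‖x‖ ^ 2)) :
    HasFDerivAt (fun y : F => g (‖y‖ ^ 2)) ((2 * d) • innerSL ℝ x) x := by
  refine (hg.comp_hasFDerivAt x (hasStrictFDerivAt_norm_sq x).hasFDerivAt).congr_fderiv ?_
  module

theorem gradient_comp_norm_sq [CompleteSpace F] (hg : HasDerivAt g d (‖x‖ ^ 2)) :
    gradient (fun y : F => g (‖y‖ ^ 2)) x = (2 * d) • x := by
  refine HasGradientAt.gradient ?_
  rw [hasGradientAt_iff_hasFDerivAt, map_smul]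
  exact hasFDerivAt_comp_norm_sq hg

end RadialCalculus

theorem hasDerivAt_comp_log_div_two {h : ℝ → ℝ} {d t : ℝ} (hh : HasDerivAt h d (log t / 2))
    (ht : t ≠ 0) : HasDerivAt (fun t => h (log t / 2)) (d / (2 * t)) t := by
  refine (hh.comp t ((hasDerivAt_log ht).div_const 2)).congr_deriv ?_
  field_simp

section

variable {N : ℕ}

local notation "E" => EuclideanSpace ℝ (Fin N)

theorem lap_comp_norm_sq {g g' : ℝ → ℝ} {d' : ℝ} {x : E}
    (hg : ∀ᶠ t in 𝓝 (‖x‖ ^ 2), HasDerivAt g (g' t) t)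
    (hg' : HasDerivAt g' d' (‖x‖ ^ 2)) :
    lap (fun y : E => g (‖y‖ ^ 2)) x = 2 * N * g' (‖x‖ ^ 2) + 4 * ‖x‖ ^ 2 * d' := by
  have hg_near : ∀ᶠ y in 𝓝 x, HasDerivAt g (g' (‖y‖ ^ 2)) (‖y‖ ^ 2) :=
    ((continuous_norm.pow 2).tendsto x).eventually hg
  have hpartial : ∀ i : Fin N, fderiv ℝ (fun y => fderiv ℝ (fun z : E => g (‖z‖ ^ 2)) y
      (EuclideanSpace.single i 1)) x (EuclideanSpace.single i 1)
        = 2 * g' (‖x‖ ^ 2) + 4 * d' * x i ^ 2 := by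
    intro i
    have hev : (fun y => fderiv ℝ (fun z : E => g (‖z‖ ^ 2)) y (EuclideanSpace.single i 1))
        =ᶠ[𝓝 x] fun y => 2 * g' (‖y‖ ^ 2) * y i := by
      filter_upwards [hg_near] with y hy
      simp [(hasFDerivAt_comp_norm_sq hy).fderiv, EuclideanSpace.inner_single_right]
    have hd : HasFDerivAt (fun y : E => 2 * g' (‖y‖ ^ 2) * y i) _ x :=
      ((hasFDerivAt_comp_norm_sq hg').const_mul 2).mul
        (EuclideanSpace.proj (𝕜 := ℝ) i).hasFDerivAt
    rw [hev.fderiv_eq, hd.fderiv]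
    simp only [add_apply, smul_apply, PiLp.proj_apply,
      PiLp.single_eq_same, smul_eq_mul, coe_innerSL_apply, EuclideanSpace.inner_single_right,
      conj_trivial]
    ring
  simp only [lap, hpartial, Finset.sum_add_distrib, ← Finset.mul_sum,
    ← EuclideanSpace.real_norm_sq_eq, Finset.sum_const, Finset.card_univ, Fintype.card_fin,
    nsmul_eq_mul]
  ring

theorem normSq_mul_Umu_comp_log_norm {h h' h'' : ℝ → ℝ} (hh : ∀ s, HasDerivAt h (h' s) s)
    (hh' : ∀ s, HasDerivAt h' (h'' s) s) {x : E} (hx : x ≠ 0) :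
    ‖x‖ ^ 2 * Umu (fun y => h (log ‖y‖)) x =
      (1 / 4) * (h' (log ‖x‖) / h (log ‖x‖)) ^ 2
        - (1 / 2) * (h'' (log ‖x‖) + ((N : ℝ) - 2) * h' (log ‖x‖)) / h (log ‖x‖) := by
  have hlog : ∀ y : E, log (‖y‖ ^ 2) / 2 = log ‖y‖ := fun y => by rw [Real.log_pow]; ring
  have hμ : (fun y : E => h (log ‖y‖)) = fun y => h (log (‖y‖ ^ 2) / 2) := by
    simp only [hlog]
  have hg : ∀ t ≠ 0, HasDerivAt (fun t => h (log t / 2)) (h' (log t / 2) / (2 * t)) t :=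
    fun t ht => hasDerivAt_comp_log_div_two (hh _) ht
  have hx2 : ‖x‖ ^ 2 ≠ 0 := pow_ne_zero 2 (norm_ne_zero_iff.mpr hx)
  have hg' : HasDerivAt (fun t => h' (log t / 2) / (2 * t)) _ (‖x‖ ^ 2) :=
    (hasDerivAt_comp_log_div_two (hh' _) hx2).div ((hasDerivAt_id _).const_mul 2)
      (mul_ne_zero two_ne_zero hx2)
  have hgrad := gradient_comp_norm_sq (hg _ hx2)
  have hlap := lap_comp_norm_sq (eventually_ne_nhds hx2 |>.mono hg) hg'
  rw [← hμ] at hgrad hlap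
  simp only [hlog] at hgrad hlap
  rw [Umu, hgrad, hlap, norm_smul, Real.norm_eq_abs, mul_pow, sq_abs]
  field_simp
  ring

end

theorem Function.Periodic.frequently_comp_log_norm_eq {F : Type*} [NormedAddCommGroup F]
    [NormedSpace ℝ F] [Nontrivial F] {V : ℝ → ℝ} {T : ℝ} (hV : Function.Periodic V T)
    (hT : 0 < T) (θ : ℝ) : ∃ᶠ x in 𝓝[≠] (0 : F), V (log ‖x‖) = V θ := by
  obtain ⟨e, he⟩ := exists_norm_eq F zero_le_one
  have hnorm : ∀ n : ℕ, ‖exp (θ - n * T) • e‖ = exp (θ - n * T) := fun n => by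
    rw [norm_smul, he, Real.norm_of_nonneg (exp_pos _).le, mul_one]
  have hlim : Tendsto (fun n : ℕ => exp (θ - n * T) • e) atTop (𝓝[≠] 0) := by
    refine tendsto_nhdsWithin_iff.mpr ⟨?_, Eventually.of_forall fun n => ?_⟩
    · rw [tendsto_zero_iff_norm_tendsto_zero]
      simp only [hnorm]
      refine tendsto_exp_atBot.comp (tendsto_atBot_add_const_left _ θ ?_)
      exact tendsto_neg_atTop_atBot.comp
        (tendsto_natCast_atTop_atTop.atTop_mul_const hT)
    · rw [mem_compl_singleton_iff, ← norm_ne_zero_iff, hnorm]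
      exact (exp_pos _).ne'
  refine hlim.frequently (Frequently.of_forall fun n => ?_)
  rw [hnorm, log_exp, hV.sub_nat_mul_eq]

def oscillatingProfile (N : ℕ) (θ : ℝ) : ℝ :=
  (1 / 4) * (cos θ / (2 + sin θ)) ^ 2
    - (1 / 2) * (((N : ℝ) - 2) * cos θ - sin θ) / (2 + sin θ)

section

variable {N : ℕ}

theorem oscillatingProfile_periodic : Function.Periodic (oscillatingProfile N) (2 * π) :=
  fun θ => by simp only [oscillatingProfile, sin_add_two_pi, cos_add_two_pi]

theorem oscillatingProfile_pi_div_two : oscillatingProfile N (π / 2) = 1 / 6 := by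
  norm_num [oscillatingProfile]

theorem oscillatingProfile_le (θ : ℝ) :
    oscillatingProfile N θ ≤ 1 / 4 + (|(N : ℝ) - 2| + 1) / 2 := by
  have hden : 1 ≤ 2 + sin θ := by linarith [neg_one_le_sin θ]
  have hcos : (cos θ / (2 + sin θ)) ^ 2 ≤ 1 := by
    rw [div_pow, div_le_one (by positivity)]
    nlinarith [cos_sq_le_one θ]
  have hnum : |((N : ℝ) - 2) * cos θ - sin θ| ≤ |(N : ℝ) - 2| + 1 := by
    calc |((N : ℝ) - 2) * cos θ - sin θ| ≤ |(N : ℝ) - 2| * |cos θ| + |sin θ| := by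
          rw [← abs_mul]; exact abs_sub _ _
      _ ≤ |(N : ℝ) - 2| * 1 + 1 := by
          gcongr
          exacts [abs_cos_le_one θ, abs_sin_le_one θ]
      _ = _ := by ring
  have hquot : -(|(N : ℝ) - 2| + 1) ≤ (((N : ℝ) - 2) * cos θ - sin θ) / (2 + sin θ) := by
    rw [le_div_iff₀ (by linarith)]
    nlinarith [neg_abs_le (((N : ℝ) - 2) * cos θ - sin θ), abs_nonneg ((N : ℝ) - 2)]
  rw [oscillatingProfile, mul_div_assoc]
  linarith

theorem normSq_mul_Umu_oscillating {x : EuclideanSpace ℝ (Fin N)} (hx : x ≠ 0) :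
    ‖x‖ ^ 2 * Umu (fun y => 2 + sin (log ‖y‖)) x = oscillatingProfile N (log ‖x‖) := by
  rw [normSq_mul_Umu_comp_log_norm (h := fun s => 2 + sin s) (h'' := fun s => -sin s)
    (fun s => (hasDerivAt_sin s).const_add 2) hasDerivAt_cos hx, oscillatingProfile]
  ring

end

/-- For the oscillating weight `μ(x) = 2 + sin(log|x|)`:
the formula for `|x|² U_μ` holds on the punctured ball `B_{1/2}`,
`lim sup_{x→0} |x|² U_μ(x) > 0`, and consequently
`c_{0,μ} = lim inf_{x→0}(c₀(N) - |x|² U_μ) < c₀(N)`. -/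
theorem Umu_oscillating_weight (N : ℕ) (hN : 3 ≤ N) :
    (∀ x : EuclideanSpace ℝ (Fin N), 0 < ‖x‖ → ‖x‖ < 1 / 2 →
      ‖x‖ ^ 2 * Umu (fun y => 2 + Real.sin (Real.log ‖y‖)) x =
        (1 / 4) * (Real.cos (Real.log ‖x‖) / (2 + Real.sin (Real.log ‖x‖))) ^ 2
          - (1 / 2) * (((N : ℝ) - 2) * Real.cos (Real.log ‖x‖) - Real.sin (Real.log ‖x‖))
              / (2 + Real.sin (Real.log ‖x‖))) ∧
    0 < Filter.limsup (fun x : EuclideanSpace ℝ (Fin N) =>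
          ‖x‖ ^ 2 * Umu (fun y => 2 + Real.sin (Real.log ‖y‖)) x)
        (nhdsWithin 0 {0}ᶜ) ∧
    Filter.liminf (fun x : EuclideanSpace ℝ (Fin N) =>
        (((N : ℝ) - 2) / 2) ^ 2 - ‖x‖ ^ 2 * Umu (fun y => 2 + Real.sin (Real.log ‖y‖)) x)
      (nhdsWithin 0 {0}ᶜ) < (((N : ℝ) - 2) / 2) ^ 2 := by
  have : Nonempty (Fin N) := ⟨⟨0, by omega⟩⟩
  set f := fun x : EuclideanSpace ℝ (Fin N) =>
    ‖x‖ ^ 2 * Umu (fun y => 2 + sin (log ‖y‖)) x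
  have hf : ∀ᶠ x in 𝓝[≠] 0, f x = oscillatingProfile N (log ‖x‖) :=
    eventually_mem_nhdsWithin.mono fun x hx => normSq_mul_Umu_oscillating hx
  have hbdd : IsBoundedUnder (· ≤ ·) (𝓝[≠] 0) f :=
    ⟨_, eventually_map.mpr (hf.mono fun x hx => hx.trans_le (oscillatingProfile_le _))⟩
  have hfreq : ∃ᶠ x in 𝓝[≠] 0, 1 / 6 ≤ f x := by
    have hV := (oscillatingProfile_periodic (N := N)).frequently_comp_log_norm_eq
      (F := EuclideanSpace ℝ (Fin N)) two_pi_pos (π / 2)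
    refine (hV.and_eventually hf).mono fun x ⟨hVx, hfx⟩ => ?_
    rw [hfx, hVx, oscillatingProfile_pi_div_two]
  have hlimsup : 1 / 6 ≤ limsup f (𝓝[≠] 0) := le_limsup_of_frequently_le hfreq hbdd
  refine ⟨fun x hx _ => normSq_mul_Umu_oscillating (norm_pos_iff.mp hx), by linarith, ?_⟩
  rw [liminf_const_sub _ f _ hbdd (IsCoboundedUnder.of_frequently_ge hfreq)]
  linarith
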